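/- arXiv:2301.10097 — 2 statements merged into one kernel-verified Lean document; each statement's English description precedes it below -/
import Mathlib

section
/- Let m ∈ ℕ and let α₁, …, α_{m+1} ∈ ℝ satisfy α_{m+1} = (m + 1) − ∑_{i=1}^{m} αᵢ (equivalently ∑_{i=1}^{m+1} αᵢ = m + 1). Define G(θ) = ∏_{i=1}^{m+1} (αᵢ + (1 − αᵢ) cos θ). Then θ ↦ G(θ) − 1 is O(θ⁴) as θ → 0. -/
open Filter Asymptotics Finset
open scoped Topology

/-!
Write `c i = 1 - α i`, so that each factor is `1 - c i * (1 - cos θ)`. A product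
`∏ (1 - c i * x)` equals `1 - (∑ c i) * x + O(x²)`, and the compensation step makes
`∑ c i = 0`; hence `G θ - 1 = O((1 - cos θ)²) = O(θ⁴)`.
-/

theorem Finset.prod_one_sub_mul_sub_one_add_sum_mul_isBigO {𝕜 ι : Type*} [NormedField 𝕜]
    (s : Finset ι) (c : ι → 𝕜) :
    (fun x : 𝕜 => ∏ i ∈ s, (1 - c i * x) - 1 + (∑ i ∈ s, c i) * x) =O[𝓝 0]
      fun x => x ^ 2 := by
  classical
  induction s using Finset.induction_on with
  | empty => simpa using isBigO_zero _ _
  | insert a s ha ih =>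
    have hfactor : (fun x : 𝕜 => 1 - c a * x) =O[𝓝 0] fun _ => (1 : 𝕜) :=
      (continuous_const.sub (continuous_const.mul continuous_id)).continuousAt.isBigO_one 𝕜
    have hstep : (fun x : 𝕜 => (1 - c a * x) * (∏ i ∈ s, (1 - c i * x) - 1 + (∑ i ∈ s, c i) * x)
        + c a * (∑ i ∈ s, c i) * x ^ 2) =O[𝓝 0] fun x => x ^ 2 :=
      ((hfactor.mul ih).congr_right fun x => one_mul _).add (isBigO_const_mul_self _ _ _)
    refine hstep.congr_left fun x => ?_
    rw [prod_insert ha, sum_insert ha]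
    ring

theorem Real.one_sub_cos_isBigO_sq :
    (fun θ : ℝ => 1 - Real.cos θ) =O[𝓝 0] fun θ => θ ^ 2 := by
  refine IsBigO.of_bound (1 / 2) (Eventually.of_forall fun θ => ?_)
  have hlower := Real.one_sub_sq_div_two_le_cos (x := θ)
  rw [Real.norm_of_nonneg (sub_nonneg.2 (Real.cos_le_one θ)),
    Real.norm_of_nonneg (sq_nonneg θ)]
  linarith

/-- With the compensation step `α_{m+1} = m + 1 − ∑_{i=1}^m αᵢ`
(equivalently `∑ αᵢ = m + 1`), the total attenuation of the `m+1` successive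
three-point filters is `1 + O(θ⁴)` as `θ → 0`. -/
theorem stmt7 (m : ℕ) (α : Fin (m + 1) → ℝ)
    (hα : ∑ i : Fin (m + 1), α i = (m + 1 : ℝ)) (G : ℝ → ℝ)
    (hG : ∀ θ : ℝ, G θ = ∏ i : Fin (m + 1), (α i + (1 - α i) * Real.cos θ)) :
    (fun θ : ℝ => G θ - 1) =O[𝓝 0] fun θ : ℝ => θ ^ 4 := by
  have hsum : ∑ i, (1 - α i) = 0 := by simp [sum_sub_distrib, hα]
  have hprod : (fun x : ℝ => ∏ i, (1 - (1 - α i) * x) - 1) =O[𝓝 0] fun x => x ^ 2 := by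
    simpa [hsum] using univ.prod_one_sub_mul_sub_one_add_sum_mul_isBigO fun i => 1 - α i
  have hcos_tendsto : Tendsto (fun θ : ℝ => 1 - Real.cos θ) (𝓝 0) (𝓝 0) := by
    simpa using (tendsto_const_nhds (x := (1 : ℝ))).sub (Real.continuous_cos.tendsto 0)
  have hG' : ∀ θ, G θ - 1 = ∏ i, (1 - (1 - α i) * (1 - Real.cos θ)) - 1 := fun θ => by
    rw [hG]
    congr 1
    exact prod_congr rfl fun i _ => by ring
  calc (fun θ : ℝ => G θ - 1)
      = fun θ => ∏ i, (1 - (1 - α i) * (1 - Real.cos θ)) - 1 := funext hG'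
    _ =O[𝓝 0] fun θ => (1 - Real.cos θ) ^ 2 := hprod.comp_tendsto hcos_tendsto
    _ =O[𝓝 0] fun θ => (θ ^ 2) ^ 2 := Real.one_sub_cos_isBigO_sq.pow 2
    _ = fun θ => θ ^ 4 := funext fun θ => by ring
end

section
/- Let E = EuclideanSpace ℝ (Fin 3), let S : E → ℝ be continuously differentiable, let T ∈ ℝ, let (x_j)_{j∈Fin J} ⊆ E be quadrature points with weights (w_j)_{j∈Fin J} ⊆ ℝ, and let (ω_k)_{k∈Fin K} ⊆ ℝ be particle weights. For particle positions X : Fin K → E define n_h(X, y) = ∑_{k'} ω_{k'} S(y − X_{k'}) and assume n_h(X, x_j) > 0 for all j at the point X under consideration. Define H_e(X) = T ∑_j w_j · n_h(X, x_j) · log(n_h(X, x_j)). Then H_e is differentiable in the position X_k of the k-th particle, and its gradient with respect to X_k is ∇_{X_k} H_e = −T ω_k ∑_j w_j (1 + log(n_h(X, x_j))) ∇S(x_j − X_k). -/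
open InnerProductSpace Function

/-
Moving only particle `k` changes each quadrature density by an affine function of
`S (x_j - X_k)`: `n_j(z) = ω_k S(x_j - z) + c_j`, so `∇n_j = -ω_k ∇S(x_j - X_k)`.
The chain rule for `t ↦ t log t` (differentiable at `n_j > 0`, with derivative `1 + log t`)
and linearity of the sum over `j` give the Fréchet derivative of `H_e`; the linear Riesz
isomorphism turns it into the stated gradient.
-/

theorem Finset.sum_apply_update_eq_add_sum_erase {ι α M : Type*} [Fintype ι] [DecidableEq ι]
    [AddCommMonoid M] (f : ι → α → M) (X : ι → α) (k : ι) (z : α) :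
    ∑ i, f i (update X k z i) = f k z + ∑ i ∈ Finset.univ.erase k, f i (X i) := by
  rw [← Finset.add_sum_erase _ _ (Finset.mem_univ k), update_self]
  congr 1
  exact Finset.sum_congr rfl fun i hi => by rw [update_of_ne (Finset.ne_of_mem_erase hi)]

section Calculus

variable {E : Type*} [NormedAddCommGroup E] [NormedSpace ℝ E]

theorem HasFDerivAt.mul_log {f : E → ℝ} {f' : E →L[ℝ] ℝ} {x : E} (hf : HasFDerivAt f f' x)
    (hx : f x ≠ 0) :
    HasFDerivAt (fun z => f z * Real.log (f z)) ((1 + Real.log (f x)) • f') x := by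
  rw [add_comm]
  exact (Real.hasDerivAt_mul_log hx).comp_hasFDerivAt x hf

theorem hasFDerivAt_comp_const_sub {S : E → ℝ} {a x : E} (hS : DifferentiableAt ℝ S (a - x)) :
    HasFDerivAt (fun z => S (a - z)) (-fderiv ℝ S (a - x)) x := by
  simpa [comp_def] using hS.hasFDerivAt.comp x ((hasFDerivAt_id x).const_sub a)

theorem hasFDerivAt_sum_mul_comp_sub_update {ι : Type*} [Fintype ι] [DecidableEq ι]
    {S : E → ℝ} (ω : ι → ℝ) (X : ι → E) (k : ι) (y : E)
    (hS : DifferentiableAt ℝ S (y - X k)) :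
    HasFDerivAt (fun z => ∑ i, ω i * S (y - update X k z i))
      (-ω k • fderiv ℝ S (y - X k)) (X k) := by
  simp_rw [Finset.sum_apply_update_eq_add_sum_erase (fun i p => ω i * S (y - p))]
  simpa using ((hasFDerivAt_comp_const_sub hS).const_mul (ω k)).add_const
    (∑ i ∈ Finset.univ.erase k, ω i * S (y - X i))

theorem hasFDerivAt_const_mul_sum_mul_log {ι : Type*} [Fintype ι] (T : ℝ) (w : ι → ℝ)
    {n : ι → E → ℝ} {n' : ι → E →L[ℝ] ℝ} {x : E} (hn : ∀ j, HasFDerivAt (n j) (n' j) x)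
    (hx : ∀ j, n j x ≠ 0) :
    HasFDerivAt (fun z => T * ∑ j, w j * (n j z * Real.log (n j z)))
      (T • ∑ j, (w j * (1 + Real.log (n j x))) • n' j) x := by
  simp_rw [mul_smul]
  exact (HasFDerivAt.fun_sum fun j _ => ((hn j).mul_log (hx j)).const_mul (w j)).const_mul T

end Calculus

/-- Gradient of the discrete electron thermal energy
`H_e(X) = T ∑_j w_j n_h(X, x_j) log n_h(X, x_j)`, with
`n_h(X, y) = ∑_{k'} ω_{k'} S(y − X_{k'})`, with respect to the position `X_k`
of the `k`-th particle:
`∇_{X_k} H_e = −T ω_k ∑_j w_j (1 + log n_h(X, x_j)) ∇S(x_j − X_k)`. -/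
theorem stmt12 (S : EuclideanSpace ℝ (Fin 3) → ℝ) (hS : ContDiff ℝ 1 S)
    (T : ℝ) (J K : ℕ)
    (xq : Fin J → EuclideanSpace ℝ (Fin 3)) (w : Fin J → ℝ) (ω : Fin K → ℝ)
    (nh : (Fin K → EuclideanSpace ℝ (Fin 3)) → EuclideanSpace ℝ (Fin 3) → ℝ)
    (hnh : ∀ X y, nh X y = ∑ k' : Fin K, ω k' * S (y - X k'))
    (He : (Fin K → EuclideanSpace ℝ (Fin 3)) → ℝ)
    (hHe : ∀ X, He X = T * ∑ j : Fin J, w j * (nh X (xq j) * Real.log (nh X (xq j))))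
    (X : Fin K → EuclideanSpace ℝ (Fin 3)) (k : Fin K)
    (hpos : ∀ j : Fin J, 0 < nh X (xq j)) :
    DifferentiableAt ℝ (fun z => He (Function.update X k z)) (X k) ∧
      gradient (fun z => He (Function.update X k z)) (X k)
        = -(T * ω k) • ∑ j : Fin J,
            (w j * (1 + Real.log (nh X (xq j)))) • gradient S (xq j - X k) := by
  have hdensity : ∀ j, HasFDerivAt (fun z => nh (update X k z) (xq j))
      (-ω k • fderiv ℝ S (xq j - X k)) (X k) := fun j => by
    simp only [hnh]
    exact hasFDerivAt_sum_mul_comp_sub_update ω X k (xq j) (hS.differentiable one_ne_zero _)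
  have hHe' := hasFDerivAt_const_mul_sum_mul_log T w hdensity
    (fun j => by simpa using (hpos j).ne')
  simp only [update_eq_self, ← hHe] at hHe'
  refine ⟨hHe'.differentiableAt, ?_⟩
  rw [(hasFDerivAt_iff_hasGradientAt.mp hHe').gradient]
  simp only [map_smul, map_sum, Finset.smul_sum]
  refine Finset.sum_congr rfl fun j _ => ?_
  rw [gradient]
  module
end
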